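/- arXiv:2410.20333 — 4 statements merged into one kernel-verified Lean document; each statement's English description precedes it below -/
import Mathlib

section
/- For any finite sets A and B, if X is a subset of A × B such that every element of X is the unique element of X in its row or the unique element of X in its column, then |X| ≤ |A| + |B| - 1. Moreover, if |A| ≥ 2 and |B| ≥ 2, then |X| ≤ |A| + |B| - 2. -/
/-- For finite sets `A`, `B` and `X ⊆ A × B`, if every element of `X` is the unique element
of `X` in its row (same second coordinate) or the unique element of `X` in its column
(same first coordinate), then `|X| ≤ |A| + |B| - 1`; moreover if `|A| ≥ 2` and `|B| ≥ 2`
then `|X| ≤ |A| + |B| - 2`. -/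
theorem stmt0 {α β : Type*} [DecidableEq α] [DecidableEq β]
    (A : Finset α) (B : Finset β) (X : Finset (α × β))
    (hX : X ⊆ A ×ˢ B)
    (huniq : ∀ x ∈ X, (∀ y ∈ X, y.2 = x.2 → y = x) ∨ (∀ y ∈ X, y.1 = x.1 → y = x)) :
    X.card ≤ A.card + B.card - 1 ∧
      (2 ≤ A.card → 2 ≤ B.card → X.card ≤ A.card + B.card - 2) := by
  classical
  by_cases hXe : X = ∅
  · subst hXe; simp
  have hXne : X.Nonempty := Finset.nonempty_of_ne_empty hXe
  set R := X.filter (fun x => ∀ y ∈ X, y.2 = x.2 → y = x) with hRdef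
  set C := X \ R with hCdef
  have hRX : R ⊆ X := Finset.filter_subset _ _
  have hCX : C ⊆ X := Finset.sdiff_subset
  have hRprop : ∀ r ∈ R, ∀ y ∈ X, y.2 = r.2 → y = r := fun r hr =>
    (Finset.mem_filter.1 hr).2
  have hCprop : ∀ c ∈ C, ∀ y ∈ X, y.1 = c.1 → y = c := by
    intro c hc
    have hcX := hCX hc
    rcases huniq c hcX with h | h
    · exact absurd (Finset.mem_filter.2 ⟨hcX, h⟩) (Finset.mem_sdiff.1 hc).2
    · exact h
  -- basic cardinalities
  have hsum : C.card + R.card = X.card := Finset.card_sdiff_add_card_eq_card hRX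
  have hRcard : R.card = (R.image Prod.snd).card := by
    rw [Finset.card_image_of_injOn]
    intro x hx y hy hxy
    exact hRprop y hy x (hRX hx) hxy
  have hCcard : C.card = (C.image Prod.fst).card := by
    rw [Finset.card_image_of_injOn]
    intro x hx y hy hxy
    exact hCprop y hy x (hCX hx) hxy
  -- subsets
  have hsndB : ∀ (S : Finset (α × β)), S ⊆ X → S.image Prod.snd ⊆ B := by
    intro S hS b hb
    rcases Finset.mem_image.1 hb with ⟨x, hx, rfl⟩
    exact (Finset.mem_product.1 (hX (hS hx))).2
  have hfstA : ∀ (S : Finset (α × β)), S ⊆ X → S.image Prod.fst ⊆ A := by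
    intro S hS a ha
    rcases Finset.mem_image.1 ha with ⟨x, hx, rfl⟩
    exact (Finset.mem_product.1 (hX (hS hx))).1
  by_cases hRe : R = ∅
  · -- X = C, all column-unique
    have hCeq : C = X := by rw [hCdef, hRe, Finset.sdiff_empty]
    have hXcard : X.card = (X.image Prod.fst).card := by rw [← hCeq]; exact hCcard
    have hle : X.card ≤ A.card := by
      rw [hXcard]; exact Finset.card_le_card (hfstA X (le_refl _))
    obtain ⟨x, hx⟩ := hXne
    have hB1 : 1 ≤ B.card :=
      Finset.card_pos.2 ⟨x.2, (Finset.mem_product.1 (hX hx)).2⟩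
    exact ⟨by omega, fun hA2 hB2 => by omega⟩
  by_cases hCe : C = ∅
  · -- X = R, all row-unique
    have hReq : R = X := by
      apply Finset.Subset.antisymm hRX
      intro x hx
      by_contra hxR
      have hxC : x ∈ C := Finset.mem_sdiff.2 ⟨hx, hxR⟩
      rw [hCe] at hxC
      exact Finset.notMem_empty x hxC
    have hle : X.card ≤ B.card := by
      rw [← hReq, hRcard]; exact Finset.card_le_card (hsndB R hRX)
    obtain ⟨x, hx⟩ := hXne
    have hA1 : 1 ≤ A.card :=
      Finset.card_pos.2 ⟨x.1, (Finset.mem_product.1 (hX hx)).1⟩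
    exact ⟨by omega, fun hA2 hB2 => by omega⟩
  -- main case: both R and C nonempty
  have hRne : R.Nonempty := Finset.nonempty_of_ne_empty hRe
  have hCne : C.Nonempty := Finset.nonempty_of_ne_empty hCe
  -- disjointness of snd images
  have hdisjsnd : Disjoint (R.image Prod.snd) (C.image Prod.snd) := by
    rw [Finset.disjoint_left]
    intro b hbR hbC
    rcases Finset.mem_image.1 hbR with ⟨r, hr, hrb⟩
    rcases Finset.mem_image.1 hbC with ⟨c, hc, hcb⟩
    have : c = r := hRprop r hr c (hCX hc) (by rw [hcb, hrb])
    exact (Finset.mem_sdiff.1 hc).2 (this ▸ hr)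
  have hdisjfst : Disjoint (R.image Prod.fst) (C.image Prod.fst) := by
    rw [Finset.disjoint_left]
    intro a haR haC
    rcases Finset.mem_image.1 haR with ⟨r, hr, hra⟩
    rcases Finset.mem_image.1 haC with ⟨c, hc, hca⟩
    have : r = c := hCprop c hc r (hRX hr) (by rw [hra, hca])
    exact (Finset.mem_sdiff.1 hc).2 (this ▸ (this ▸ hr))
  have h1 : (R.image Prod.snd).card + (C.image Prod.snd).card ≤ B.card := by
    rw [← Finset.card_union_of_disjoint hdisjsnd]
    exact Finset.card_le_card (Finset.union_subset (hsndB R hRX) (hsndB C hCX))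
  have h2 : (R.image Prod.fst).card + (C.image Prod.fst).card ≤ A.card := by
    rw [← Finset.card_union_of_disjoint hdisjfst]
    exact Finset.card_le_card (Finset.union_subset (hfstA R hRX) (hfstA C hCX))
  have hsndCpos : 1 ≤ (C.image Prod.snd).card :=
    Finset.card_pos.2 (hCne.image _)
  have hfstRpos : 1 ≤ (R.image Prod.fst).card :=
    Finset.card_pos.2 (hRne.image _)
  refine ⟨by omega, fun _ _ => by omega⟩
end

section
/- If {V₁, V₂} is a partition of the vertex set of a graph G, then G + K_1 is isomorphic to a subgraph of (G[V₁] + K_1) ⊠ (G[V₂] + K_1). In particular, G is contained in this strong product. -/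
open SimpleGraph

universe u v

/-- The strong product `G ⊠ H` of two simple graphs: distinct vertices `(a,b)`, `(c,d)` are
adjacent iff (`a = c` or `a ~ c`) and (`b = d` or `b ~ d`). -/
def SimpleGraph.strongProd {α β : Type*} (G : SimpleGraph α) (H : SimpleGraph β) :
    SimpleGraph (α × β) where
  Adj x y := x ≠ y ∧ (x.1 = y.1 ∨ G.Adj x.1 y.1) ∧ (x.2 = y.2 ∨ H.Adj x.2 y.2)
  symm := ⟨by
    rintro ⟨a, b⟩ ⟨c, d⟩ ⟨hne, h1, h2⟩
    refine ⟨Ne.symm hne, ?_, ?_⟩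
    · rcases h1 with h | h
      · exact Or.inl h.symm
      · exact Or.inr h.symm
    · rcases h2 with h | h
      · exact Or.inl h.symm
      · exact Or.inr h.symm⟩
  loopless := ⟨by rintro x ⟨hne, -, -⟩; exact hne rfl⟩

/-- `H.IsContainedEmb G` means `H` is isomorphic to a subgraph of `G`. -/
def SimpleGraph.IsContainedEmb {α β : Type*} (H : SimpleGraph α) (G : SimpleGraph β) : Prop :=
  ∃ f : α ↪ β, ∀ a b, H.Adj a b → G.Adj (f a) (f b)

/-- The complete join `G + H`: disjoint copies of `G` and `H` with all edges between them. -/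
def SimpleGraph.join {α β : Type*} (G : SimpleGraph α) (H : SimpleGraph β) :
    SimpleGraph (α ⊕ β) where
  Adj x y :=
    match x, y with
    | Sum.inl a, Sum.inl b => G.Adj a b
    | Sum.inr a, Sum.inr b => H.Adj a b
    | _, _ => True
  symm := ⟨by
    rintro (a | a) (b | b) h
    · exact h.symm
    · trivial
    · trivial
    · exact h.symm⟩
  loopless := ⟨by
    rintro (a | a) h
    · exact G.loopless.irrefl a h
    · exact H.loopless.irrefl a h⟩

/-- If `{V₁, V₂}` is a partition of the vertex set of `G`, then `G + K₁` (and in particular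
`G` itself) is isomorphic to a subgraph of `(G[V₁] + K₁) ⊠ (G[V₂] + K₁)`. -/
theorem stmt3 {V : Type*} (G : SimpleGraph V) (V₁ V₂ : Set V)
    (hdisj : Disjoint V₁ V₂) (hcover : V₁ ∪ V₂ = Set.univ) :
    (G.join (⊤ : SimpleGraph Unit)).IsContainedEmb
      (((G.induce V₁).join (⊤ : SimpleGraph Unit)).strongProd
        ((G.induce V₂).join (⊤ : SimpleGraph Unit))) ∧
    G.IsContainedEmb
      (((G.induce V₁).join (⊤ : SimpleGraph Unit)).strongProd
        ((G.induce V₂).join (⊤ : SimpleGraph Unit))) := by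
  classical
  have hmem : ∀ v : V, v ∉ V₁ → v ∈ V₂ := by
    intro v hv
    have : v ∈ V₁ ∪ V₂ := by rw [hcover]; trivial
    exact this.resolve_left hv
  let f : V ⊕ Unit → (↥V₁ ⊕ Unit) × (↥V₂ ⊕ Unit) := fun x =>
    match x with
    | Sum.inl v =>
        if h : v ∈ V₁ then (Sum.inl ⟨v, h⟩, Sum.inr ())
        else (Sum.inr (), Sum.inl ⟨v, hmem v h⟩)
    | Sum.inr _ => (Sum.inr (), Sum.inr ())
  have hf1 : ∀ v (h : v ∈ V₁), f (Sum.inl v) = (Sum.inl ⟨v, h⟩, Sum.inr ()) := by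
    intro v h; simp only [f]; rw [dif_pos h]
  have hf2 : ∀ v (h : v ∉ V₁), f (Sum.inl v) = (Sum.inr (), Sum.inl ⟨v, hmem v h⟩) := by
    intro v h; simp only [f]; rw [dif_neg h]
  have hf3 : ∀ u : Unit, f (Sum.inr u) = (Sum.inr (), Sum.inr ()) := fun _ => rfl
  have hinj : Function.Injective f := by
    rintro (a | a) (b | b) h
    · by_cases ha : a ∈ V₁ <;> by_cases hb : b ∈ V₁
      · rw [hf1 a ha, hf1 b hb] at h
        exact congrArg Sum.inl (congrArg Subtype.val (Sum.inl.inj (congrArg Prod.fst h)))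
      · rw [hf1 a ha, hf2 b hb] at h; simp at h
      · rw [hf2 a ha, hf1 b hb] at h; simp at h
      · rw [hf2 a ha, hf2 b hb] at h
        exact congrArg Sum.inl (congrArg Subtype.val (Sum.inl.inj (congrArg Prod.snd h)))
    · by_cases ha : a ∈ V₁
      · rw [hf1 a ha, hf3 b] at h; simp at h
      · rw [hf2 a ha, hf3 b] at h; simp at h
    · by_cases hb : b ∈ V₁
      · rw [hf3 a, hf1 b hb] at h; simp at h
      · rw [hf3 a, hf2 b hb] at h; simp at h
    · rfl
  have hadj : ∀ a b, (G.join (⊤ : SimpleGraph Unit)).Adj a b →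
      ((((G.induce V₁).join (⊤ : SimpleGraph Unit)).strongProd
        ((G.induce V₂).join (⊤ : SimpleGraph Unit)))).Adj (f a) (f b) := by
    rintro (a | a) (b | b) h
    · have hab : G.Adj a b := h
      have hne : a ≠ b := hab.ne
      by_cases ha : a ∈ V₁ <;> by_cases hb : b ∈ V₁
      · rw [hf1 a ha, hf1 b hb]
        exact ⟨by simp [hne], Or.inr hab, Or.inl rfl⟩
      · rw [hf1 a ha, hf2 b hb]
        exact ⟨by simp, Or.inr trivial, Or.inr trivial⟩
      · rw [hf2 a ha, hf1 b hb]
        exact ⟨by simp, Or.inr trivial, Or.inr trivial⟩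
      · rw [hf2 a ha, hf2 b hb]
        exact ⟨by simp [hne], Or.inl rfl, Or.inr hab⟩
    · by_cases ha : a ∈ V₁
      · rw [hf1 a ha, hf3 b]
        exact ⟨by simp, Or.inr trivial, Or.inl rfl⟩
      · rw [hf2 a ha, hf3 b]
        exact ⟨by simp, Or.inl rfl, Or.inr trivial⟩
    · by_cases hb : b ∈ V₁
      · rw [hf3 a, hf1 b hb]
        exact ⟨by simp, Or.inr trivial, Or.inl rfl⟩
      · rw [hf3 a, hf2 b hb]
        exact ⟨by simp, Or.inl rfl, Or.inr trivial⟩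
    · simp [SimpleGraph.join] at h
  refine ⟨⟨⟨f, hinj⟩, hadj⟩, ?_⟩
  exact ⟨⟨fun v => f (Sum.inl v), fun a b h => Sum.inl.inj (hinj h)⟩,
    fun a b h => hadj (Sum.inl a) (Sum.inl b) h⟩
end

section
/- Every graph G with maximum degree at most 3 has a vertex partition {V₁, V₂} such that both induced subgraphs G[V₁] and G[V₂] have maximum degree at most 1. -/
open Finset

namespace Stmt5Aux

variable {V : Type*} [Fintype V] [DecidableEq V] (G : SimpleGraph V) [DecidableRel G.Adj]

/-- weight of a partition (S, Sᶜ): sum over vertices of same-side neighbour counts. -/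
def w (S : Finset V) : ℕ :=
  ∑ u ∈ S, (G.neighborFinset u ∩ S).card + ∑ u ∈ Sᶜ, (G.neighborFinset u ∩ Sᶜ).card

lemma w_compl (S : Finset V) : w G Sᶜ = w G S := by
  simp [w, compl_compl, add_comm]

lemma card_inter_insert (N A : Finset V) (v : V) (hv : v ∉ A) :
    (N ∩ insert v A).card = (N ∩ A).card + (if v ∈ N then 1 else 0) := by
  by_cases hvN : v ∈ N
  · have : N ∩ insert v A = insert v (N ∩ A) := by
      ext u
      simp only [mem_inter, mem_insert]
      constructor
      · rintro ⟨h1, h2 | h2⟩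
        · exact Or.inl h2
        · exact Or.inr ⟨h1, h2⟩
      · rintro (rfl | ⟨h1, h2⟩)
        · exact ⟨hvN, Or.inl rfl⟩
        · exact ⟨h1, Or.inr h2⟩
    rw [this, card_insert_of_notMem (by simp [hv]), if_pos hvN]
  · have : N ∩ insert v A = N ∩ A := by
      ext u; simp only [mem_inter, mem_insert]
      constructor
      · rintro ⟨h1, h2 | h2⟩
        · exact absurd (h2 ▸ h1) hvN
        · exact ⟨h1, h2⟩
      · tauto
    rw [this, if_neg hvN, add_zero]

lemma sum_expand (A : Finset V) (v : V) (hv : v ∉ A) :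
    ∑ u ∈ insert v A, (G.neighborFinset u ∩ insert v A).card
      = ∑ u ∈ A, (G.neighborFinset u ∩ A).card + 2 * (G.neighborFinset v ∩ A).card := by
  rw [Finset.sum_insert hv]
  have h1 : (G.neighborFinset v ∩ insert v A).card = (G.neighborFinset v ∩ A).card := by
    rw [card_inter_insert _ _ _ hv, if_neg (by simp), add_zero]
  have h2 : ∀ u ∈ A, (G.neighborFinset u ∩ insert v A).card
      = (G.neighborFinset u ∩ A).card + (if v ∈ G.neighborFinset u then 1 else 0) :=
    fun u _ => card_inter_insert _ _ _ hv
  rw [h1, Finset.sum_congr rfl h2, Finset.sum_add_distrib]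
  have h3 : ∑ u ∈ A, (if v ∈ G.neighborFinset u then 1 else 0)
      = (G.neighborFinset v ∩ A).card := by
    rw [← Finset.card_filter]
    congr 1
    ext u
    simp [SimpleGraph.mem_neighborFinset, SimpleGraph.adj_comm, and_comm]
  rw [h3]; ring

lemma key (hdeg : ∀ v, G.degree v ≤ 3)
    {S : Finset V} (hminS : ∀ T : Finset V, w G S ≤ w G T)
    {v : V} (hv : v ∈ S) : (G.neighborFinset v ∩ S).card ≤ 1 := by
  by_contra hcon
  push_neg at hcon
  set N := G.neighborFinset v with hN
  set A := S.erase v with hA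
  have hvA : v ∉ A := notMem_erase v S
  have hSA : insert v A = S := insert_erase hv
  have hvNc : v ∉ N := by simp [hN]
  -- N ∩ A = N ∩ S
  have hNA : N ∩ A = N ∩ S := by
    ext u
    simp only [hA, mem_inter, mem_erase]
    constructor
    · rintro ⟨h1, _, h2⟩; exact ⟨h1, h2⟩
    · rintro ⟨h1, h2⟩
      refine ⟨h1, fun huv => ?_, h2⟩
      exact hvNc (huv ▸ h1)
  -- a + b = deg v ≤ 3
  have hab : (N ∩ S).card + (N ∩ Sᶜ).card = G.degree v := by
    rw [← SimpleGraph.card_neighborFinset_eq_degree, ← hN,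
      ← card_union_of_disjoint (Finset.disjoint_of_subset_left (inter_subset_right)
        (Finset.disjoint_of_subset_right (inter_subset_right) disjoint_compl_right)),
      ← inter_union_distrib_left, union_compl, inter_univ]
  -- expand w S
  have e1 : ∑ u ∈ S, (G.neighborFinset u ∩ S).card
      = ∑ u ∈ A, (G.neighborFinset u ∩ A).card + 2 * (N ∩ S).card := by
    conv_lhs => rw [← hSA]
    rw [sum_expand G A v hvA, hNA]
  -- expand w A 's complement part
  have hvSc : v ∉ Sᶜ := by simp [hv]
  have hAc : Aᶜ = insert v Sᶜ := by rw [hA, compl_erase]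
  have e2 : ∑ u ∈ Aᶜ, (G.neighborFinset u ∩ Aᶜ).card
      = ∑ u ∈ Sᶜ, (G.neighborFinset u ∩ Sᶜ).card + 2 * (N ∩ Sᶜ).card := by
    rw [hAc, sum_expand G Sᶜ v hvSc]
  have hwS : w G S = ∑ u ∈ A, (G.neighborFinset u ∩ A).card + 2 * (N ∩ S).card
      + ∑ u ∈ Sᶜ, (G.neighborFinset u ∩ Sᶜ).card := by
    rw [w, e1]
  have hwA : w G A = ∑ u ∈ A, (G.neighborFinset u ∩ A).card
      + ∑ u ∈ Sᶜ, (G.neighborFinset u ∩ Sᶜ).card + 2 * (N ∩ Sᶜ).card := by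
    rw [w, e2]; ring
  have hmin := hminS A
  have hd := hdeg v
  omega

end Stmt5Aux

/-- Every graph with maximum degree at most 3 has a vertex partition `{V₁, V₂}` such that
both induced subgraphs `G[V₁]`, `G[V₂]` have maximum degree at most 1. -/
theorem stmt5 {V : Type*} [Fintype V] [DecidableEq V]
    (G : SimpleGraph V) [DecidableRel G.Adj]
    (h : ∀ v, G.degree v ≤ 3) :
    ∃ V₁ V₂ : Finset V, Disjoint V₁ V₂ ∧ V₁ ∪ V₂ = Finset.univ ∧
      (∀ v ∈ V₁, (G.neighborFinset v ∩ V₁).card ≤ 1) ∧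
      (∀ v ∈ V₂, (G.neighborFinset v ∩ V₂).card ≤ 1) := by
  obtain ⟨S, -, hS⟩ := Finset.exists_min_image (Finset.univ : Finset (Finset V))
    (Stmt5Aux.w G) ⟨∅, Finset.mem_univ ∅⟩
  have hminS : ∀ T : Finset V, Stmt5Aux.w G S ≤ Stmt5Aux.w G T :=
    fun T => hS T (Finset.mem_univ T)
  have hminSc : ∀ T : Finset V, Stmt5Aux.w G Sᶜ ≤ Stmt5Aux.w G T :=
    fun T => (Stmt5Aux.w_compl G S) ▸ hminS T
  exact ⟨S, Sᶜ, disjoint_compl_right, Finset.union_compl S,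
    fun v hv => Stmt5Aux.key G h hminS hv,
    fun v hv => Stmt5Aux.key G h hminSc hv⟩
end

section
/- If a graph G has a pair of k-orthogonal tree-decompositions, then G has a tree-decomposition in which every bag induces a subgraph of treewidth at most k − 1. -/
open SimpleGraph

universe u v

/-- A tree-decomposition of `G` indexed by the tree `T`: bags cover all edges, and for each
vertex `v` the nodes whose bags contain `v` induce a nonempty connected subtree of `T`. -/
structure SimpleGraph.TreeDecomp {V : Type u} {ι : Type v} (G : SimpleGraph V)
    (T : SimpleGraph ι) : Type (max u v) where
  bags : ι → Set V
  treeConnected : T.Connected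
  treeAcyclic : T.IsAcyclic
  mem_bags_of_adj : ∀ ⦃x y : V⦄, G.Adj x y → ∃ i, x ∈ bags i ∧ y ∈ bags i
  subtree : ∀ x : V, (T.induce {i | x ∈ bags i}).Connected

/-- The treewidth of a graph: the least `k` admitting a tree-decomposition with all bags
of size at most `k + 1`. -/
noncomputable def SimpleGraph.tw {V : Type u} (G : SimpleGraph V) : ℕ :=
  sInf {k | ∃ (ι : Type u) (T : SimpleGraph ι) (d : G.TreeDecomp T),
    ∀ i, (d.bags i).ncard ≤ k + 1}

/-- If a graph `G` has a pair of `k`-orthogonal tree-decompositions, then `G` has a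
tree-decomposition in which every bag induces a subgraph of treewidth at most `k - 1`. -/
theorem stmt13 {V : Type u} [Fintype V] (G : SimpleGraph V) (k : ℕ)
    (h : ∃ (ι₁ ι₂ : Type u) (T₁ : SimpleGraph ι₁) (T₂ : SimpleGraph ι₂)
      (d₁ : G.TreeDecomp T₁) (d₂ : G.TreeDecomp T₂),
      ∀ i j, (d₁.bags i ∩ d₂.bags j).ncard ≤ k) :
    ∃ (ι : Type u) (T : SimpleGraph ι) (d : G.TreeDecomp T),
      ∀ i, (G.induce (d.bags i)).tw ≤ k - 1 := by
  obtain ⟨ι₁, ι₂, T₁, T₂, d₁, d₂, horth⟩ := h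
  refine ⟨ι₁, T₁, d₁, fun i => ?_⟩
  have : k - 1 ∈ {m | ∃ (ι : Type u) (T : SimpleGraph ι)
      (d : (G.induce (d₁.bags i)).TreeDecomp T), ∀ j, (d.bags j).ncard ≤ m + 1} := by
    refine ⟨ι₂, T₂, ⟨fun j => {v | (v : V) ∈ d₂.bags j}, d₂.treeConnected, d₂.treeAcyclic,
      ?_, ?_⟩, ?_⟩
    · intro x y hxy
      obtain ⟨j, hx, hy⟩ := d₂.mem_bags_of_adj hxy
      exact ⟨j, hx, hy⟩
    · intro x
      exact d₂.subtree (x : V)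
    · intro j
      have himg : (Subtype.val '' {v : (d₁.bags i) | (v : V) ∈ d₂.bags j})
          = d₁.bags i ∩ d₂.bags j := by
        ext v
        simp [Set.mem_image]
        tauto
      have hcard : ({v : (d₁.bags i) | (v : V) ∈ d₂.bags j}).ncard
          = (d₁.bags i ∩ d₂.bags j).ncard := by
        rw [← himg, Set.ncard_image_of_injective _ Subtype.val_injective]
      have := horth i j
      show ({v : (d₁.bags i) | (v : V) ∈ d₂.bags j}).ncard ≤ k - 1 + 1
      omega
  have hle := Nat.sInf_le this
  exact hle
end
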